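/- Let k ≥ 2, X^b an l×k real matrix, H an m×l real matrix, R an m×m symmetric positive definite real matrix, P^b = (1/(k − 1)) X^b (X^b)ᵀ, P̃^a = ((k − 1) I_k + (H X^b)ᵀ R⁻¹ H X^b)⁻¹, and K = P^b Hᵀ (H P^b Hᵀ + R)⁻¹. Then the ETKF analysis covariance agrees with the Kalman filter analysis covariance: X^b P̃^a (X^b)ᵀ = (I_l − K H) P^b. -/

import Mathlib

/-!
Since `P^b = (k - 1)⁻¹ X^b (X^b)ᵀ`, both sides are of the form `X^b M (X^b)ᵀ`. The Woodbury
identity rewrites `P̃^a` as `(k - 1)⁻¹ I - (k - 1)⁻² (H X^b)ᵀ (H P^b Hᵀ + R)⁻¹ H X^b`, which is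
exactly the middle factor of `(I - K H) P^b`. Positive definiteness of `R` makes the innovation
covariance `H P^b Hᵀ + R` positive definite, hence invertible, so Woodbury applies.
-/

open Matrix

namespace Matrix

theorem PosSemidef.mul_mul_transpose_add_posDef {l m : Type*} [Fintype l] [Fintype m]
    {P : Matrix l l ℝ} (hP : P.PosSemidef) (H : Matrix m l ℝ) {R : Matrix m m ℝ}
    (hR : R.PosDef) : (H * P * Hᵀ + R).PosDef :=
  hR.posSemidef_add (hP.mul_mul_conjTranspose_same H)

variable {k l m 𝕜 : Type*} [Fintype k] [Fintype l] [Fintype m] [DecidableEq k] [DecidableEq l]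
  [DecidableEq m] [Field 𝕜]

theorem inv_smul_one_add_transpose_mul_inv_mul {c : 𝕜} (hc : c ≠ 0) (A : Matrix m k 𝕜)
    {R : Matrix m m 𝕜} (hR : IsUnit R) (hS : IsUnit (c⁻¹ • (A * Aᵀ) + R)) :
    (c • 1 + Aᵀ * R⁻¹ * A)⁻¹ = c⁻¹ • 1 - (c⁻¹ * c⁻¹) • (Aᵀ * (c⁻¹ • (A * Aᵀ) + R)⁻¹ * A) := by
  -- Woodbury with `A := c • 1`, `U := Aᵀ`, `C := R⁻¹`, `V := A`.
  have hc_mul : (c • 1 : Matrix k k 𝕜) * c⁻¹ • 1 = 1 := by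
    rw [smul_mul, Matrix.one_mul, smul_smul, mul_inv_cancel₀ hc, one_smul]
  have hc_inv : (c • 1 : Matrix k k 𝕜)⁻¹ = c⁻¹ • 1 := inv_eq_right_inv hc_mul
  have hS_eq : R⁻¹⁻¹ + A * (c • 1 : Matrix k k 𝕜)⁻¹ * Aᵀ = c⁻¹ • (A * Aᵀ) + R := by
    rw [hc_inv, nonsing_inv_nonsing_inv _ ((isUnit_iff_isUnit_det R).mp hR), add_comm,
      Matrix.mul_smul, Matrix.mul_one, smul_mul]
  rw [add_mul_mul_inv_eq_sub _ _ _ _ (IsUnit.of_mul_eq_one _ hc_mul)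
    (isUnit_nonsing_inv_iff.mpr hR) (hS_eq ▸ hS), hS_eq, hc_inv]
  simp only [smul_mul, Matrix.mul_smul, Matrix.one_mul, Matrix.mul_one, smul_smul]

theorem mul_inv_smul_one_add_mul_transpose_eq {c : 𝕜} (hc : c ≠ 0) (X : Matrix l k 𝕜)
    (H : Matrix m l 𝕜) {R : Matrix m m 𝕜} (hR : IsUnit R) {P : Matrix l l 𝕜}
    (hP : P = c⁻¹ • (X * Xᵀ)) (hS : IsUnit (H * P * Hᵀ + R)) :
    X * (c • 1 + (H * X)ᵀ * R⁻¹ * (H * X))⁻¹ * Xᵀ =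
      (1 - P * Hᵀ * (H * P * Hᵀ + R)⁻¹ * H) * P := by
  subst hP
  have hHPH : H * (c⁻¹ • (X * Xᵀ)) * Hᵀ = c⁻¹ • (H * X * (H * X)ᵀ) := by
    simp only [Matrix.mul_smul, smul_mul, transpose_mul, Matrix.mul_assoc]
  rw [hHPH] at hS ⊢
  rw [inv_smul_one_add_transpose_mul_inv_mul hc _ hR hS]
  simp only [Matrix.sub_mul, Matrix.mul_sub, smul_mul, Matrix.mul_smul, Matrix.one_mul,
    Matrix.mul_one, smul_smul, smul_sub, transpose_mul, Matrix.mul_assoc]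

end Matrix

/-- The ETKF analysis covariance agrees with the Kalman filter analysis covariance:
`X^b P̃^a (X^b)ᵀ = (I - K H) P^b` with `P^b = (1/(k-1)) X^b (X^b)ᵀ` and
`K = P^b Hᵀ (H P^b Hᵀ + R)⁻¹`. -/
theorem etkf_analysis_covariance_eq_kalman
    (k l m : ℕ) (hk : 2 ≤ k)
    (Xb : Matrix (Fin l) (Fin k) ℝ)
    (H : Matrix (Fin m) (Fin l) ℝ)
    (R : Matrix (Fin m) (Fin m) ℝ) (hR : R.PosDef)
    (Pb : Matrix (Fin l) (Fin l) ℝ)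
    (hPb : Pb = (1 / ((k : ℝ) - 1)) • (Xb * Xbᵀ))
    (Pa : Matrix (Fin k) (Fin k) ℝ)
    (hPa : Pa = (((k : ℝ) - 1) • (1 : Matrix (Fin k) (Fin k) ℝ) +
      (H * Xb)ᵀ * R⁻¹ * (H * Xb))⁻¹)
    (K : Matrix (Fin l) (Fin m) ℝ)
    (hK : K = Pb * Hᵀ * (H * Pb * Hᵀ + R)⁻¹) :
    Xb * Pa * Xbᵀ = (1 - K * H) * Pb := by
  have hc : (0 : ℝ) < (k : ℝ) - 1 := by
    have : (2 : ℝ) ≤ k := by exact_mod_cast hk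
    linarith
  rw [one_div] at hPb
  have hPb_psd : Pb.PosSemidef :=
    hPb ▸ (posSemidef_self_mul_conjTranspose Xb).smul (inv_nonneg.mpr hc.le)
  subst hPa hK
  exact mul_inv_smul_one_add_mul_transpose_eq hc.ne' Xb H hR.isUnit hPb
    (hPb_psd.mul_mul_transpose_add_posDef H hR).isUnit
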